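/- Let p be a prime with p ≡ 3 (mod 8). If ε_p = α + β√p is the fundamental unit of Q(√p) (with α, β positive integers), then 2ε_p is a square in Q(√p): there exist positive integers β₁, β₂ with β = β₁·β₂ and −β₁² + p·β₂² = 2, i.e., √(2ε_p) = β₁ + β₂√p. -/
import Mathlib

private lemma aux_pos_of_eq_mul (p k c : ℤ) (hp : 0 < p) (hc : 0 < c) (h : c = p * k) :
    0 < k := by
  rcases lt_trichotomy k 0 with h' | h' | h' <;> nlinarith

private lemma aux_sq_of_pos {a u : ℤ} (h : a = u ^ 2 ∨ a = -u ^ 2) (ha : 0 < a) :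
    a = u ^ 2 := by
  rcases h with h | h
  · exact h
  · nlinarith [sq_nonneg u]

private lemma aux_odd_sq8 (x m : ℤ) (hx : x = 2 * m + 1) : ∃ n, x ^ 2 = 8 * n + 1 := by
  obtain ⟨n, hn⟩ := Int.even_mul_succ_self m
  exact ⟨n, by rw [hx]; linear_combination 4 * hn⟩

private lemma aux_sq4 (x : ℤ) : ∃ n, x ^ 2 = 4 * n ∨ x ^ 2 = 4 * n + 1 := by
  rcases Int.even_or_odd x with ⟨m, hm⟩ | ⟨m, hm⟩
  · exact ⟨m ^ 2, Or.inl (by rw [hm]; ring)⟩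
  · exact ⟨m ^ 2 + m, Or.inr (by rw [hm]; ring)⟩

/-- If `p ≡ 3 (mod 8)` and `ε_p = α + β√p` is the fundamental unit of `ℚ(√p)`
(the minimal positive solution of `X² − p·Y² = 1`), then `2ε_p` is a square in
`ℚ(√p)`: there are positive integers `β₁, β₂` with `β = β₁β₂`, `−β₁² + p·β₂² = 2`
and `2α = β₁² + p·β₂²` (i.e. `√(2ε_p) = β₁ + β₂√p`). -/
theorem stmt_8 (p : ℕ) (hp : p.Prime) (hp3 : p % 8 = 3)
    (α β : ℤ) (hα : 0 < α) (hβ : 0 < β)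
    (hpell : α ^ 2 - p * β ^ 2 = 1)
    (hmin : ∀ α' β' : ℤ, 0 < α' → 0 < β' → α' ^ 2 - p * β' ^ 2 = 1 → α ≤ α') :
    ∃ β₁ β₂ : ℤ, 0 < β₁ ∧ 0 < β₂ ∧ β = β₁ * β₂ ∧
      -β₁ ^ 2 + p * β₂ ^ 2 = 2 ∧ 2 * α = β₁ ^ 2 + p * β₂ ^ 2 := by
  have hp2 : (2:ℤ) ≤ (p:ℤ) := by exact_mod_cast hp.two_le
  have hpne : (p:ℤ) ≠ 0 := by linarith
  have hppos : (0:ℤ) < (p:ℤ) := by linarith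
  have hpZ : Prime (p:ℤ) := Int.prime_iff_natAbs_prime.mpr (by simpa using hp)
  obtain ⟨b, hb8⟩ : ∃ b, (p:ℤ) = 8 * b + 3 := ⟨((p:ℤ) - 3) / 8, by omega⟩
  have hα2 : 2 ≤ α := by
    by_contra h
    have hα1 : α = 1 := by omega
    have h0 : (p:ℤ) * β ^ 2 = 0 := by rw [hα1] at hpell; linarith
    have : (0:ℤ) < (p:ℤ) * β ^ 2 := by positivity
    linarith
  have hfac : (α - 1) * (α + 1) = (p:ℤ) * β ^ 2 := by linear_combination hpell
  rcases Int.even_or_odd α with ⟨t, ht⟩ | ⟨t, ht⟩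
  · -- α even : the main case
    -- β is odd
    obtain ⟨s, hs⟩ : ∃ s, β = 2 * s + 1 := by
      rcases Int.even_or_odd β with ⟨s, hse⟩ | ⟨s, hso⟩
      · exfalso
        have h4 : (4:ℤ) * (t ^ 2 - (p:ℤ) * s ^ 2) = 1 := by
          rw [ht, hse] at hpell; linear_combination hpell
        obtain ⟨d, hd⟩ : ∃ d, (4:ℤ) * d = 1 := ⟨_, h4⟩
        omega
      · exact ⟨s, hso⟩
    have hcop : IsCoprime (α - 1) (α + 1) := ⟨t, 1 - t, by rw [ht]; ring⟩
    rcases (hpZ.dvd_mul.mp ⟨β ^ 2, hfac⟩) with ⟨k, hk⟩ | ⟨k, hk⟩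
    · -- p ∣ α - 1 : impossible mod 8
      exfalso
      have hk0 : 0 < k := aux_pos_of_eq_mul _ _ _ hppos (by linarith) hk
      have hmul : k * (α + 1) = β ^ 2 := by
        apply mul_left_cancel₀ hpne
        linear_combination hfac - (α + 1) * hk
      have hcop2 : IsCoprime k (α + 1) :=
        hcop.of_isCoprime_of_dvd_left ⟨p, by rw [hk]; ring⟩
      obtain ⟨u, hu⟩ := Int.sq_of_isCoprime hcop2 hmul
      have hu' : k = u ^ 2 := aux_sq_of_pos hu hk0
      obtain ⟨v, hv⟩ := Int.sq_of_isCoprime hcop2.symm (by rw [mul_comm]; exact hmul)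
      have hv' : α + 1 = v ^ 2 := aux_sq_of_pos hv (by linarith)
      -- u and v are odd since β² = u²v² is odd
      have hβsq : β ^ 2 = u ^ 2 * v ^ 2 := by rw [← hmul, hu', hv']
      obtain ⟨mu, hmu⟩ : ∃ m, u = 2 * m + 1 := by
        rcases Int.even_or_odd u with ⟨m, hme⟩ | ⟨m, hmo⟩
        · exfalso
          have h4 : (4:ℤ) * (m ^ 2 * v ^ 2 - s ^ 2 - s) = 1 := by
            rw [hs, hme] at hβsq; linear_combination -hβsq
          obtain ⟨d, hd⟩ : ∃ d, (4:ℤ) * d = 1 := ⟨_, h4⟩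
          omega
        · exact ⟨m, hmo⟩
      obtain ⟨mv, hmv⟩ : ∃ m, v = 2 * m + 1 := by
        rcases Int.even_or_odd v with ⟨m, hme⟩ | ⟨m, hmo⟩
        · exfalso
          have h4 : (4:ℤ) * (u ^ 2 * m ^ 2 - s ^ 2 - s) = 1 := by
            rw [hs, hme] at hβsq; linear_combination -hβsq
          obtain ⟨d, hd⟩ : ∃ d, (4:ℤ) * d = 1 := ⟨_, h4⟩
          omega
        · exact ⟨m, hmo⟩
      obtain ⟨a, ha⟩ := aux_odd_sq8 u mu hmu
      obtain ⟨c, hc⟩ := aux_odd_sq8 v mv hmv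
      have heq : v ^ 2 - (p:ℤ) * u ^ 2 = 2 := by
        linear_combination -hv' + hk + (p:ℤ) * hu'
      rw [ha, hc, hb8] at heq
      have h8 : (8:ℤ) * (c - 8 * a * b - 3 * a - b) = 4 := by linear_combination heq
      obtain ⟨d, hd⟩ : ∃ d, (8:ℤ) * d = 4 := ⟨_, h8⟩
      omega
    · -- p ∣ α + 1 : the good case
      have hk0 : 0 < k := aux_pos_of_eq_mul _ _ _ hppos (by linarith) hk
      have hmul : k * (α - 1) = β ^ 2 := by
        apply mul_left_cancel₀ hpne
        linear_combination hfac - (α - 1) * hk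
      have hcop2 : IsCoprime k (α - 1) :=
        hcop.symm.of_isCoprime_of_dvd_left ⟨p, by rw [hk]; ring⟩
      obtain ⟨u, hu⟩ := Int.sq_of_isCoprime hcop2 hmul
      have hu' : k = u ^ 2 := aux_sq_of_pos hu hk0
      obtain ⟨v, hv⟩ := Int.sq_of_isCoprime hcop2.symm (by rw [mul_comm]; exact hmul)
      have hv' : α - 1 = v ^ 2 := aux_sq_of_pos hv (by linarith)
      have hu0 : u ≠ 0 := by
        intro h; rw [h] at hu'; simp at hu'; omega
      have hv0 : v ≠ 0 := by
        intro h; rw [h] at hv'; simp at hv'; omega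
      refine ⟨|v|, |u|, abs_pos.mpr hv0, abs_pos.mpr hu0, ?_, ?_, ?_⟩
      · have h1 : β ^ 2 = (|v| * |u|) ^ 2 := by
          rw [mul_pow, sq_abs, sq_abs]; linear_combination -hmul + (α-1) * hu' + u ^ 2 * hv'
        have h2 : (β - |v| * |u|) * (β + |v| * |u|) = 0 := by linear_combination h1
        rcases mul_eq_zero.mp h2 with h3 | h3
        · linarith
        · have : 0 < |v| * |u| := mul_pos (abs_pos.mpr hv0) (abs_pos.mpr hu0)
          linarith
      · rw [sq_abs, sq_abs]; linear_combination hv' - hk - (p:ℤ) * hu'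
      · rw [sq_abs, sq_abs]; linear_combination hv' + hk + (p:ℤ) * hu'
  · -- α odd : impossible, contradicts minimality
    exfalso
    obtain ⟨s, hs⟩ : ∃ s, β = 2 * s := by
      rcases Int.even_or_odd β with ⟨s, hse⟩ | ⟨s, hso⟩
      · exact ⟨s, by omega⟩
      · exfalso
        obtain ⟨a, ha⟩ := aux_odd_sq8 α t ht
        obtain ⟨c, hc⟩ := aux_odd_sq8 β s hso
        rw [ha, hc, hb8] at hpell
        have h8 : (8:ℤ) * (a - 8 * b * c - b - 3 * c) = 3 := by linear_combination hpell
        obtain ⟨d, hd⟩ : ∃ d, (8:ℤ) * d = 3 := ⟨_, h8⟩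
        omega
    have ht1 : 1 ≤ t := by omega
    have hs1 : 1 ≤ s := by omega
    have hfac2 : t * (t + 1) = (p:ℤ) * s ^ 2 := by
      apply mul_left_cancel₀ (by norm_num : (4:ℤ) ≠ 0)
      rw [ht, hs] at hpell; linear_combination hpell
    rcases (hpZ.dvd_mul.mp ⟨s ^ 2, hfac2⟩) with ⟨k, hk⟩ | ⟨k, hk⟩
    · -- p ∣ t : gives a smaller solution, contradicting minimality
      have hk0 : 0 < k := aux_pos_of_eq_mul _ _ _ hppos (by linarith) hk
      have hmul : k * (t + 1) = s ^ 2 := by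
        apply mul_left_cancel₀ hpne
        linear_combination hfac2 - (t + 1) * hk
      have hcop2 : IsCoprime k (t + 1) :=
        IsCoprime.of_isCoprime_of_dvd_left
          (show IsCoprime t (t + 1) from ⟨-1, 1, by ring⟩) ⟨p, by rw [hk]; ring⟩
      obtain ⟨u, hu⟩ := Int.sq_of_isCoprime hcop2 hmul
      have hu' : k = u ^ 2 := aux_sq_of_pos hu hk0
      obtain ⟨v, hv⟩ := Int.sq_of_isCoprime hcop2.symm (by rw [mul_comm]; exact hmul)
      have hv' : t + 1 = v ^ 2 := aux_sq_of_pos hv (by linarith)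
      have hu0 : u ≠ 0 := by intro h; rw [h] at hu'; simp at hu'; omega
      have hv0 : v ≠ 0 := by intro h; rw [h] at hv'; simp at hv'; omega
      have hsol : |v| ^ 2 - (p:ℤ) * |u| ^ 2 = 1 := by
        rw [sq_abs, sq_abs]; linear_combination -hv' + hk + (p:ℤ) * hu'
      have hle := hmin |v| |u| (abs_pos.mpr hv0) (abs_pos.mpr hu0) hsol
      have h1 : |v| ≤ v ^ 2 := by
        have h2 : 1 ≤ |v| := abs_pos.mpr hv0
        nlinarith [sq_abs v]
      linarith [ht, hv', h1, hle]
    · -- p ∣ t + 1 : gives a solution of x² ≡ -1 mod p, impossible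
      have hk0 : 0 < k := aux_pos_of_eq_mul _ _ _ hppos (by linarith) hk
      have hmul : k * t = s ^ 2 := by
        apply mul_left_cancel₀ hpne
        linear_combination hfac2 - t * hk
      have hcop2 : IsCoprime k t :=
        IsCoprime.of_isCoprime_of_dvd_left
          (show IsCoprime (t + 1) t from ⟨1, -1, by ring⟩) ⟨p, by rw [hk]; ring⟩
      obtain ⟨u, hu⟩ := Int.sq_of_isCoprime hcop2 hmul
      have hu' : k = u ^ 2 := aux_sq_of_pos hu hk0
      obtain ⟨v, hv⟩ := Int.sq_of_isCoprime hcop2.symm (by rw [mul_comm]; exact hmul)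
      have hv' : t = v ^ 2 := aux_sq_of_pos hv (by linarith)
      have heq2 : (p:ℤ) * u ^ 2 - v ^ 2 = 1 := by
        linear_combination -hk + hv' - (p:ℤ) * hu'
      rcases Int.even_or_odd u with ⟨m, hm⟩ | ⟨m, hm⟩
      · have hv2 : v ^ 2 = 4 * ((p:ℤ) * m ^ 2) - 1 := by
          linear_combination -heq2 + (p:ℤ) * (u + 2 * m) * hm
        obtain ⟨n, hn⟩ := aux_sq4 v
        rcases hn with hn | hn
        · have h4 : (4:ℤ) * ((p:ℤ) * m ^ 2 - n) = 1 := by linear_combination hn - hv2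
          obtain ⟨d, hd⟩ : ∃ d, (4:ℤ) * d = 1 := ⟨_, h4⟩
          omega
        · have h4 : (4:ℤ) * ((p:ℤ) * m ^ 2 - n) = 2 := by linear_combination hn - hv2
          obtain ⟨d, hd⟩ : ∃ d, (4:ℤ) * d = 2 := ⟨_, h4⟩
          omega
      · have hv2 : v ^ 2 = 4 * (8 * b * (m ^ 2 + m) + 2 * b + 3 * (m ^ 2 + m)) + 2 := by
          linear_combination -heq2 + (p:ℤ) * (u + 2 * m + 1) * hm + (4 * (m ^ 2 + m) + 1) * hb8
        obtain ⟨n, hn⟩ := aux_sq4 v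
        rcases hn with hn | hn
        · have h4 : (4:ℤ) * (8 * b * (m ^ 2 + m) + 2 * b + 3 * (m ^ 2 + m) - n) = -2 := by
            linear_combination hn - hv2
          obtain ⟨d, hd⟩ : ∃ d, (4:ℤ) * d = -2 := ⟨_, h4⟩
          omega
        · have h4 : (4:ℤ) * (8 * b * (m ^ 2 + m) + 2 * b + 3 * (m ^ 2 + m) - n) = -1 := by
            linear_combination hn - hv2
          obtain ⟨d, hd⟩ : ∃ d, (4:ℤ) * d = -1 := ⟨_, h4⟩
          omega
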